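/- Let D = (P,𝓑) be a symmetric 2-(v,k,λ) design with λ > 1 and let G be a flag-transitive automorphism group of D, with block B ∈ 𝓑 and n ≥ 3. If either the setwise stabilizer G_B is isomorphic to the dihedral group D_{2n}, or the induced permutation group G_B^B is isomorphic to D_{2n}, then G_B acts faithfully on B, i.e., the pointwise stabilizer G_{(B)} is trivial. -/

import Mathlib

/-!
In a symmetric design two distinct blocks meet in exactly `λ` points (a variance computation).
Let `g ∈ G` fix `B` pointwise and move a point `y`. If `λ = 2`, a block `C ≠ B` is the only block
besides `B` through the two points of `B ∩ C`, so `g` fixes every block and hence every point.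
If `λ ≥ 3`, a block `D` through `y` and `g y` is `g`-invariant, as otherwise `D ∩ g D` would
contain `g y` and the `λ` points of `D ∩ B`. So `g` fixes the `λ ≥ 3` points of `D ∩ B` but not
`y`. This is impossible, because `G_D^D` is conjugate to `G_B^B`, a transitive cyclic or dihedral
group, in which only the identity fixes three points.
-/

open scoped Pointwise

/-- A group action is primitive if it is transitive and every block is trivial
(this is the usual notion of a primitive permutation group). -/
def IsPrimitiveAction (G X : Type*) [Group G] [MulAction G X] : Prop :=
  MulAction.IsPretransitive G X ∧
    ∀ B : Set X, MulAction.IsBlock G B → B.Subsingleton ∨ B = Set.univ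

variable {P : Type*} [Fintype P] [DecidableEq P]

/-- `𝓑` is the block set of a (non-trivial) 2-design with parameters `(v, k, lam)`
on the point set `P`. -/
structure IsDesign (𝓑 : Finset (Finset P)) (v k lam : ℕ) : Prop where
  card_points : Fintype.card P = v
  blocks_card : ∀ B ∈ 𝓑, B.card = k
  two_lt_k : 2 < k
  k_lt_v : k < v - 1
  lam_pos : 0 < lam
  pair_blocks : ∀ x y : P, x ≠ y → (𝓑.filter fun B => x ∈ B ∧ y ∈ B).card = lam

/-- `G` is an automorphism group of the design with block set `𝓑`:
every element of `G` maps blocks to blocks. -/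
def IsAutGroup (G : Subgroup (Equiv.Perm P)) (𝓑 : Finset (Finset P)) : Prop :=
  ∀ g ∈ G, ∀ B ∈ 𝓑, g • B ∈ 𝓑

/-- `G` acts transitively on the flags of the design with block set `𝓑`. -/
def IsFlagTransitive (G : Subgroup (Equiv.Perm P)) (𝓑 : Finset (Finset P)) : Prop :=
  ∀ B₁ ∈ 𝓑, ∀ B₂ ∈ 𝓑, ∀ x₁ ∈ B₁, ∀ x₂ ∈ B₂, ∃ g ∈ G, g • x₁ = x₂ ∧ g • B₁ = B₂

/-- `G` acts transitively on the blocks of the design with block set `𝓑`. -/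
def IsBlockTransitive (G : Subgroup (Equiv.Perm P)) (𝓑 : Finset (Finset P)) : Prop :=
  ∀ B₁ ∈ 𝓑, ∀ B₂ ∈ 𝓑, ∃ g ∈ G, g • B₁ = B₂

open Finset

theorem IsCyclic.eq_of_mul_self_eq_one {C : Type*} [Group C] [Finite C] [IsCyclic C]
    {a b : C} (ha : a * a = 1) (hb : b * b = 1) (ha₁ : a ≠ 1) (hb₁ : b ≠ 1) : a = b := by
  classical
  have := Fintype.ofFinite C
  by_contra hab
  have hsub : ({1, a, b} : Finset C) ⊆ ({c | c ^ 2 = 1} : Finset C) := by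
    simp [insert_subset_iff, sq, ha, hb]
  have := (card_le_card hsub).trans (IsCyclic.card_pow_eq_one_le two_pos)
  rw [card_insert_of_notMem (by simp [ha₁.symm, hb₁.symm]), card_pair hab] at this
  omega

section Rotation

variable {H X : Type*} [Group H]

/-- `Z` plays the role of the rotations of a cyclic or dihedral group. Unlike being isomorphic to
`D_{2n}`, `IsDihedralLike` passes to quotients, such as `G_B^B` of `G_B`. -/
structure IsRotationSubgroup (Z : Subgroup H) : Prop where
  isCyclic : IsCyclic Z
  mul_self_eq_one : ∀ a ∉ Z, a * a = 1
  mul_mem_of_notMem : ∀ a b, a ∉ Z → b ∉ Z → a * b ∈ Z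

def IsDihedralLike (H : Type*) [Group H] : Prop :=
  ∃ Z : Subgroup H, IsRotationSubgroup Z

namespace IsRotationSubgroup

variable {Z : Subgroup H}

theorem mul_mul_eq_inv_of_notMem (hZ : IsRotationSubgroup Z) {a z : H} (ha : a ∉ Z)
    (hz : z ∈ Z) : a * z * a = z⁻¹ := by
  have haz : a * z ∉ Z := fun h => ha (by simpa using Z.mul_mem h (Z.inv_mem hz))
  rw [eq_inv_iff_mul_eq_one, ← hZ.mul_self_eq_one _ haz, mul_assoc, mul_assoc]

variable [MulAction H X]

theorem smul_eq_of_mem_of_smul_eq (hZ : IsRotationSubgroup Z) [MulAction.IsPretransitive H X]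
    {σ : H} (hσ : σ ∈ Z) {w : X} (hw : σ • w = w) (u : X) : σ • u = u := by
  obtain ⟨τ, rfl⟩ := MulAction.exists_smul_eq H w u
  by_cases hτ : τ ∈ Z
  · have := hZ.isCyclic
    rw [smul_smul, setLike_mul_comm hσ hτ, mul_smul, hw]
  · have hστ : σ * τ = τ * σ⁻¹ := by
      rw [← hZ.mul_mul_eq_inv_of_notMem hτ hσ, ← mul_assoc, ← mul_assoc, hZ.mul_self_eq_one τ hτ,
        one_mul]
    rw [smul_smul, hστ, mul_smul, inv_smul_eq_iff.mpr hw.symm]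

theorem eq_one_of_mem_of_smul_eq (hZ : IsRotationSubgroup Z) [MulAction.IsPretransitive H X]
    [FaithfulSMul H X] {σ : H} (hσ : σ ∈ Z) {w : X} (hw : σ • w = w) : σ = 1 :=
  eq_of_smul_eq_smul fun u => by rw [one_smul, hZ.smul_eq_of_mem_of_smul_eq hσ hw]

theorem eq_of_smul_eq_of_smul_eq (hZ : IsRotationSubgroup Z) [MulAction.IsPretransitive H X]
    [FaithfulSMul H X] {a b : H} {w : X} (ha : a • w = w) (hb : b • w = w) (ha₁ : a ≠ 1)
    (hb₁ : b ≠ 1) : a = b := by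
  have haZ : a ∉ Z := fun h => ha₁ (hZ.eq_one_of_mem_of_smul_eq h ha)
  have hbZ : b ∉ Z := fun h => hb₁ (hZ.eq_one_of_mem_of_smul_eq h hb)
  have hab : a * b = 1 :=
    hZ.eq_one_of_mem_of_smul_eq (X := X) (hZ.mul_mem_of_notMem a b haZ hbZ)
      (by rw [mul_smul, hb, ha])
  rw [eq_inv_of_mul_eq_one_right hab, inv_eq_of_mul_eq_one_left (hZ.mul_self_eq_one a haZ)]

theorem commute_of_smul_eq (hZ : IsRotationSubgroup Z) [MulAction.IsPretransitive H X]
    [FaithfulSMul H X] {h τ : H} {x : X} (h₁ : h ≠ 1) (hx : h • x = x)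
    (hτx : h • τ • x = τ • x) : Commute τ h := by
  have hconj : τ * h * τ⁻¹ = h := by
    refine hZ.eq_of_smul_eq_of_smul_eq ?_ hτx (by rwa [Ne, conj_eq_one_iff]) h₁
    rw [mul_smul, mul_smul, inv_smul_smul, hx]
  exact mul_inv_eq_iff_eq_mul.mp hconj

theorem exists_mem_smul_eq_of_commute (hZ : IsRotationSubgroup Z) {h ν : H} {x : X}
    (hh : h ∉ Z) (hx : h • x = x) (hν : Commute ν h) :
    ∃ w ∈ Z, w * w = 1 ∧ ν • x = w • x := by
  by_cases hνZ : ν ∈ Z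
  · refine ⟨ν, hνZ, ?_, rfl⟩
    have := hZ.mul_mul_eq_inv_of_notMem hh hνZ
    rw [← hν.eq, mul_assoc, hZ.mul_self_eq_one h hh, mul_one] at this
    rw [mul_eq_one_iff_eq_inv, ← this]
  · refine ⟨h * ν, hZ.mul_mem_of_notMem h ν hh hνZ, ?_, ?_⟩
    · rw [mul_assoc, ← mul_assoc ν, hν.eq, mul_assoc, hZ.mul_self_eq_one ν hνZ, mul_one,
        hZ.mul_self_eq_one h hh]
    · rw [← hν.eq, mul_smul, hx]

/-- Rotations act semiregularly, so a reflection `h` fixing `x` commutes with every element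
carrying `x` to another fixed point of `h`; all of these move `x` as the unique rotation of order
two does. -/
theorem eq_one_of_three_fixed_points (hZ : IsRotationSubgroup Z) [Finite H]
    [MulAction.IsPretransitive H X] [FaithfulSMul H X] {h : H} {x y z : X}
    (hxy : x ≠ y) (hxz : x ≠ z) (hyz : y ≠ z) (hx : h • x = x) (hy : h • y = y)
    (hz : h • z = z) : h = 1 := by
  by_contra h₁
  have hh : h ∉ Z := fun hm => h₁ (hZ.eq_one_of_mem_of_smul_eq hm hx)
  have hmoved : ∀ u, u ≠ x → h • u = u → ∃ w : Z, w * w = 1 ∧ w ≠ 1 ∧ u = (w : H) • x := by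
    intro u hu hfix
    obtain ⟨τ, rfl⟩ := MulAction.exists_smul_eq H x u
    obtain ⟨w, hwZ, hw, hτw⟩ :=
      hZ.exists_mem_smul_eq_of_commute hh hx (hZ.commute_of_smul_eq h₁ hx hfix)
    refine ⟨⟨w, hwZ⟩, Subtype.ext hw, fun hw₁ => hu ?_, hτw⟩
    rw [hτw, show w = 1 from congrArg Subtype.val hw₁, one_smul]
  obtain ⟨w₁, hw₁, hw₁', rfl⟩ := hmoved y hxy.symm hy
  obtain ⟨w₂, hw₂, hw₂', rfl⟩ := hmoved z hxz.symm hz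
  have := hZ.isCyclic
  exact hyz (by rw [IsCyclic.eq_of_mul_self_eq_one hw₁ hw₂ hw₁' hw₂'])

end IsRotationSubgroup

theorem IsDihedralLike.eq_one_of_three_fixed_points [MulAction H X] (hH : IsDihedralLike H)
    [Finite H] [MulAction.IsPretransitive H X] [FaithfulSMul H X] {h : H} {x y z : X}
    (hxy : x ≠ y) (hxz : x ≠ z) (hyz : y ≠ z) (hx : h • x = x) (hy : h • y = y)
    (hz : h • z = z) : h = 1 :=
  let ⟨_, hZ⟩ := hH
  hZ.eq_one_of_three_fixed_points hxy hxz hyz hx hy hz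

theorem IsDihedralLike.of_surjective {K : Type*} [Group K] (hH : IsDihedralLike H) (f : H →* K)
    (hf : Function.Surjective f) : IsDihedralLike K := by
  obtain ⟨Z, hZcyc, hZsq, hZmul⟩ := hH
  have hpre : ∀ {a : H}, f a ∉ Z.map f → a ∉ Z := fun ha hZ => ha ⟨_, hZ, rfl⟩
  refine ⟨Z.map f, isCyclic_of_surjective (f.subgroupMap Z) (f.subgroupMap_surjective Z), ?_, ?_⟩
  · intro a ha
    obtain ⟨a, rfl⟩ := hf a
    rw [← map_mul, hZsq a (hpre ha), map_one]
  · intro a b ha hb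
    obtain ⟨a, rfl⟩ := hf a
    obtain ⟨b, rfl⟩ := hf b
    exact ⟨a * b, hZmul a b (hpre ha) (hpre hb), map_mul f a b⟩

theorem DihedralGroup.isDihedralLike (n : ℕ) : IsDihedralLike (DihedralGroup n) := by
  have hr : ∀ i : ZMod n, r i ∈ Subgroup.zpowers (r 1) :=
    fun i => ⟨(i.cast : ℤ), by dsimp only; rw [r_one_zpow, ZMod.intCast_zmod_cast]⟩
  refine ⟨Subgroup.zpowers (r 1), inferInstance, ?_, ?_⟩
  · rintro (i | i) hi
    · exact absurd (hr i) hi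
    · exact sr_mul_self i
  · rintro (i | i) (j | j) hi hj
    · exact absurd (hr i) hi
    · exact absurd (hr i) hi
    · exact absurd (hr j) hj
    · rw [sr_mul_sr]; exact hr _

end Rotation

theorem Finset.eq_of_sum_eq_of_sum_sq_eq {ι : Type*} {s : Finset ι} {f : ι → ℕ} {c : ℕ}
    (h₁ : ∑ i ∈ s, f i = #s * c) (h₂ : ∑ i ∈ s, f i ^ 2 = #s * c ^ 2) :
    ∀ i ∈ s, f i = c := by
  have hvar : ∑ i ∈ s, ((f i : ℤ) - c) ^ 2 = 0 := by
    have e₁ : ∑ i ∈ s, (f i : ℤ) = #s * c := by exact_mod_cast h₁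
    have e₂ : ∑ i ∈ s, (f i : ℤ) ^ 2 = #s * c ^ 2 := by exact_mod_cast h₂
    simp only [sub_sq, sum_add_distrib, sum_sub_distrib, ← sum_mul, ← mul_sum, sum_const,
      nsmul_eq_mul, e₁, e₂]
    ring
  intro i hi
  have := (sum_eq_zero_iff_of_nonneg fun j _ => sq_nonneg ((f j : ℤ) - c)).mp hvar i hi
  exact_mod_cast sub_eq_zero.mp (pow_eq_zero_iff two_ne_zero |>.mp this)

namespace IsDesign

variable {𝓑 : Finset (Finset P)} {v k lam : ℕ}

theorem card_filter_mem_mul (hD : IsDesign 𝓑 v k lam) (x : P) :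
    #{C ∈ 𝓑 | x ∈ C} * (k - 1) = (v - 1) * lam := by
  have h := card_mul_eq_card_mul (fun C y => y ∈ C) (s := {C ∈ 𝓑 | x ∈ C}) (t := univ.erase x)
    (m := k - 1) (n := lam) ?_ ?_
  · rwa [card_erase_of_mem (mem_univ x), card_univ, hD.card_points] at h
  · intro C hC
    rw [mem_filter] at hC
    rw [← hD.blocks_card C hC.1, ← card_erase_of_mem hC.2, bipartiteAbove]
    congr 1
    ext y
    simp [and_comm]
  · intro y hy
    rw [bipartiteBelow, filter_filter]
    exact hD.pair_blocks x y (ne_of_mem_erase hy).symm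

theorem card_filter_mem (hD : IsDesign 𝓑 v k lam) (hsym : #𝓑 = v) (x : P) :
    #{C ∈ 𝓑 | x ∈ C} = k := by
  have hk : 0 < k - 1 := by have := hD.two_lt_k; omega
  have hv : 0 < v := by have := hD.k_lt_v; omega
  have hr : ∀ y, #{C ∈ 𝓑 | y ∈ C} = #{C ∈ 𝓑 | x ∈ C} := fun y =>
    Nat.eq_of_mul_eq_mul_right hk (by rw [hD.card_filter_mem_mul, hD.card_filter_mem_mul])
  have h := sum_card hr
  rw [sum_const_nat hD.blocks_card, hsym, hD.card_points] at h
  exact (Nat.eq_of_mul_eq_mul_left hv h).symm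

theorem lam_lt_card_filter_mem (hD : IsDesign 𝓑 v k lam) (x : P) :
    lam < #{C ∈ 𝓑 | x ∈ C} := by
  have h := hD.card_filter_mem_mul x
  have hkv : k - 1 < v - 1 := by have := hD.k_lt_v; omega
  by_contra! hr
  refine lt_irrefl ((v - 1) * lam) ?_
  calc (v - 1) * lam = #{C ∈ 𝓑 | x ∈ C} * (k - 1) := h.symm
    _ ≤ lam * (k - 1) := Nat.mul_le_mul_right _ hr
    _ < lam * (v - 1) := Nat.mul_lt_mul_of_pos_left hkv hD.lam_pos
    _ = (v - 1) * lam := mul_comm _ _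

theorem pred_mul_lam (hD : IsDesign 𝓑 v k lam) (hsym : #𝓑 = v) :
    (v - 1) * lam = k * (k - 1) := by
  obtain ⟨x⟩ : Nonempty P :=
    Fintype.card_pos_iff.mp (by have := hD.k_lt_v; rw [hD.card_points]; omega)
  rw [← hD.card_filter_mem_mul x, hD.card_filter_mem hsym x]

theorem sum_card_inter (hD : IsDesign 𝓑 v k lam) (hsym : #𝓑 = v) {B : Finset P} (hB : B ∈ 𝓑) :
    ∑ C ∈ 𝓑.erase B, #(B ∩ C) = #(𝓑.erase B) * lam := by
  have hdeg : ∀ x ∈ B, #{C ∈ 𝓑.erase B | x ∈ C} = k - 1 := fun x hx => by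
    rw [filter_erase, card_erase_of_mem (mem_filter.mpr ⟨hB, hx⟩), hD.card_filter_mem hsym]
  rw [Finset.sum_card_inter hdeg, hD.blocks_card B hB, card_erase_of_mem hB, hsym,
    hD.pred_mul_lam hsym]

theorem sum_card_inter_sq (hD : IsDesign 𝓑 v k lam) (hsym : #𝓑 = v) {B : Finset P}
    (hB : B ∈ 𝓑) : ∑ C ∈ 𝓑.erase B, #(B ∩ C) ^ 2 = #(𝓑.erase B) * lam ^ 2 := by
  have hpairs : ∑ C ∈ 𝓑.erase B, (#(B ∩ C) * #(B ∩ C) - #(B ∩ C)) = (k * k - k) * (lam - 1) := by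
    have h := sum_card_bipartiteAbove_eq_sum_card_bipartiteBelow
      (fun (C : Finset P) (p : P × P) => p.1 ∈ C ∧ p.2 ∈ C) (s := 𝓑.erase B) (t := B.offDiag)
    have hbelow : ∀ p ∈ B.offDiag,
        #((𝓑.erase B).bipartiteBelow (fun C p => p.1 ∈ C ∧ p.2 ∈ C) p) = lam - 1 := by
      intro p hp
      obtain ⟨hp₁, hp₂, hne⟩ := mem_offDiag.mp hp
      rw [bipartiteBelow, filter_erase, card_erase_of_mem (mem_filter.mpr ⟨hB, hp₁, hp₂⟩),
        hD.pair_blocks _ _ hne]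
    have habove : ∀ C, (B.offDiag).bipartiteAbove (fun C p => p.1 ∈ C ∧ p.2 ∈ C) C =
        (B ∩ C).offDiag := fun C => by
      ext p
      simp only [bipartiteAbove, mem_filter, mem_offDiag, mem_inter]
      tauto
    simp only [habove, offDiag_card, sum_const_nat hbelow] at h
    rw [h, hD.blocks_card B hB]
  have hsq : ∀ m : ℕ, m ^ 2 = (m * m - m) + m := fun m => by
    rw [Nat.sub_add_cancel (Nat.le_mul_self m), sq]
  have hk : k * k - k = #(𝓑.erase B) * lam := by
    rw [← Nat.mul_sub_one, ← hD.pred_mul_lam hsym, card_erase_of_mem hB, hsym]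
  calc ∑ C ∈ 𝓑.erase B, #(B ∩ C) ^ 2
      = ∑ C ∈ 𝓑.erase B, (#(B ∩ C) * #(B ∩ C) - #(B ∩ C)) + ∑ C ∈ 𝓑.erase B, #(B ∩ C) := by
        rw [← sum_add_distrib]; exact sum_congr rfl fun C _ => hsq _
    _ = #(𝓑.erase B) * lam ^ 2 := by
        rw [hpairs, hk, hD.sum_card_inter hsym hB, mul_assoc, ← mul_add, Nat.mul_sub_one,
          ← hsq]

theorem card_inter (hD : IsDesign 𝓑 v k lam) (hsym : #𝓑 = v) {B C : Finset P} (hB : B ∈ 𝓑)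
    (hC : C ∈ 𝓑) (hne : B ≠ C) : #(B ∩ C) = lam :=
  eq_of_sum_eq_of_sum_sq_eq (hD.sum_card_inter hsym hB) (hD.sum_card_inter_sq hsym hB) C
    (mem_erase.mpr ⟨hne.symm, hC⟩)

variable {M : Type*} [Group M] [MulAction M P]

theorem smul_eq_of_forall_smul_block_eq (hD : IsDesign 𝓑 v k lam) {g : M}
    (hg : ∀ C ∈ 𝓑, g • C = C) (y : P) : g • y = y := by
  by_contra hy
  have hsub : {C ∈ 𝓑 | y ∈ C} ⊆ {C ∈ 𝓑 | y ∈ C ∧ g • y ∈ C} := fun C hC => by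
    rw [mem_filter] at hC ⊢
    exact ⟨hC.1, hC.2, hg C hC.1 ▸ smul_mem_smul_finset hC.2⟩
  have := card_le_card hsub
  rw [hD.pair_blocks y (g • y) (Ne.symm hy)] at this
  exact (hD.lam_lt_card_filter_mem y).not_ge this

theorem smul_eq_of_lam_eq_two (hD : IsDesign 𝓑 v k lam) (hsym : #𝓑 = v) (hlam : lam = 2)
    {g : M} (hg : ∀ C ∈ 𝓑, g • C ∈ 𝓑) {B : Finset P} (hB : B ∈ 𝓑) (hgB : g • B = B)
    (hfix : ∀ a ∈ B, g • a = a) {C : Finset P} (hC : C ∈ 𝓑) : g • C = C := by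
  by_cases hBC : B = C
  · rwa [← hBC]
  obtain ⟨a, b, hab, hBCab⟩ := card_eq_two.mp (hlam ▸ hD.card_inter hsym hB hC hBC)
  have ha : a ∈ B ∩ C := hBCab ▸ mem_insert_self a {b}
  have hb : b ∈ B ∩ C := hBCab ▸ mem_insert_of_mem (mem_singleton_self b)
  rw [mem_inter] at ha hb
  have hgCB : g • C ≠ B := fun h => hBC (smul_left_cancel g (h.trans hgB.symm)).symm
  by_contra hgC
  have hsub : {B, C, g • C} ⊆ {D ∈ 𝓑 | a ∈ D ∧ b ∈ D} := by
    simp only [insert_subset_iff, singleton_subset_iff, mem_filter]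
    refine ⟨⟨hB, ha.1, hb.1⟩, ⟨hC, ha.2, hb.2⟩, ⟨hg C hC, ?_, ?_⟩⟩
    · exact hfix a ha.1 ▸ smul_mem_smul_finset ha.2
    · exact hfix b hb.1 ▸ smul_mem_smul_finset hb.2
  have := card_le_card hsub
  rw [hD.pair_blocks a b hab, card_insert_of_notMem (by simp [hBC, hgCB.symm]),
    card_pair (Ne.symm hgC)] at this
  omega

theorem smul_eq_of_mem_of_notMem (hD : IsDesign 𝓑 v k lam) (hsym : #𝓑 = v) {g : M}
    {B D : Finset P} (hB : B ∈ 𝓑) (hDmem : D ∈ 𝓑) (hgD : g • D ∈ 𝓑) (hfix : ∀ a ∈ B, g • a = a)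
    {y : P} (hyD : y ∈ D) (hygD : y ∈ g • D) (hyB : y ∉ B) : g • D = D := by
  by_contra hne
  have hsub : insert y (B ∩ D) ⊆ g • D ∩ D := by
    refine insert_subset (mem_inter.mpr ⟨hygD, hyD⟩) fun a ha => ?_
    rw [mem_inter] at ha ⊢
    exact ⟨hfix a ha.1 ▸ smul_mem_smul_finset ha.2, ha.2⟩
  have := card_le_card hsub
  rw [card_insert_of_notMem fun h => hyB (mem_inter.mp h).1,
    hD.card_inter hsym hB hDmem (by rintro rfl; exact hyB hyD), hD.card_inter hsym hgD hDmem hne]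
    at this
  omega

end IsDesign

section Stabilizer

variable {X : Type*} [DecidableEq X] {G : Subgroup (Equiv.Perm X)} {𝓑 : Finset (Finset X)}
  {B : Finset X}

/-- The range of this homomorphism is the paper's `G_B^B`. -/
def stabilizerToPerm (G : Subgroup (Equiv.Perm X)) (B : Finset X) :
    MulAction.stabilizer G B →* Equiv.Perm B where
  toFun h := (h : Equiv.Perm X).subtypePerm (MulAction.mem_stabilizer_finset.mp h.2)
  map_one' := rfl
  map_mul' _ _ := rfl

theorem isDihedralLike_range_stabilizerToPerm {n : ℕ}
    (hdih : Nonempty (MulAction.stabilizer G B ≃* DihedralGroup n) ∨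
      (∃ φ : MulAction.stabilizer G B →* Equiv.Perm B,
        (∀ (h : MulAction.stabilizer G B) (a : B), (φ h a : X) = h • (a : X)) ∧
        Nonempty (φ.range ≃* DihedralGroup n))) :
    IsDihedralLike (stabilizerToPerm G B).range := by
  rcases hdih with ⟨⟨e⟩⟩ | ⟨φ, hφ, ⟨e⟩⟩
  · exact ((DihedralGroup.isDihedralLike n).of_surjective e.symm.toMonoidHom e.symm.surjective
      ).of_surjective _ (MonoidHom.rangeRestrict_surjective _)
  · obtain rfl : φ = stabilizerToPerm G B :=
      MonoidHom.ext fun h => Equiv.ext fun a => Subtype.ext (hφ h a)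
    exact (DihedralGroup.isDihedralLike n).of_surjective e.symm.toMonoidHom e.symm.surjective

theorem isPretransitive_range_stabilizerToPerm (hflag : IsFlagTransitive G 𝓑) (hB : B ∈ 𝓑) :
    MulAction.IsPretransitive (stabilizerToPerm G B).range B where
  exists_smul_eq a b := by
    obtain ⟨g, hg, hgab, hgB⟩ := hflag B hB B hB a a.2 b b.2
    exact ⟨⟨stabilizerToPerm G B ⟨⟨g, hg⟩, hgB⟩, _, rfl⟩, Subtype.ext hgab⟩

theorem IsDihedralLike.smul_eq_of_three_fixed_points
    (hdl : IsDihedralLike (stabilizerToPerm G B).range) (hflag : IsFlagTransitive G 𝓑)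
    (hB : B ∈ 𝓑) {g : G} (hgB : g • B = B) {x y z : X} (hx : x ∈ B) (hy : y ∈ B) (hz : z ∈ B)
    (hxy : x ≠ y) (hxz : x ≠ z) (hyz : y ≠ z) (hgx : g • x = x) (hgy : g • y = y)
    (hgz : g • z = z) : ∀ a ∈ B, g • a = a := by
  have := isPretransitive_range_stabilizerToPerm hflag hB
  have hg := hdl.eq_one_of_three_fixed_points (h := ⟨stabilizerToPerm G B ⟨g, hgB⟩, _, rfl⟩)
    (x := ⟨x, hx⟩) (y := ⟨y, hy⟩) (z := ⟨z, hz⟩) (by simpa) (by simpa) (by simpa)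
    (Subtype.ext hgx) (Subtype.ext hgy) (Subtype.ext hgz)
  intro a ha
  exact congrArg Subtype.val (Equiv.ext_iff.mp (congrArg Subtype.val hg) ⟨a, ha⟩)

theorem IsFlagTransitive.smul_eq_of_three_fixed_points (hflag : IsFlagTransitive G 𝓑)
    (hB : B ∈ 𝓑) (hBne : B.Nonempty) (hdl : IsDihedralLike (stabilizerToPerm G B).range)
    {D : Finset X} (hD : D ∈ 𝓑) {g : G} (hgD : g • D = D) {x y z : X} (hx : x ∈ D)
    (hy : y ∈ D) (hz : z ∈ D) (hxy : x ≠ y) (hxz : x ≠ z) (hyz : y ≠ z) (hgx : g • x = x)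
    (hgy : g • y = y) (hgz : g • z = z) : ∀ a ∈ D, g • a = a := by
  obtain ⟨σ, hσ, -, hσD⟩ := hflag D hD B hB x hx _ hBne.choose_spec
  set s : G := ⟨σ, hσ⟩
  have hσD : s • D = B := hσD
  have hmem : ∀ {a}, a ∈ D → s • a ∈ B := fun ha => hσD ▸ smul_mem_smul_finset ha
  have hconj : ∀ a : X, (s * g * s⁻¹) • s • a = s • g • a := fun a => by
    rw [mul_smul, mul_smul, inv_smul_smul]
  have hfix := hdl.smul_eq_of_three_fixed_points hflag hB (g := s * g * s⁻¹)
    (by rw [mul_smul, mul_smul, ← hσD, inv_smul_smul, hgD]) (hmem hx) (hmem hy) (hmem hz)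
    ((MulAction.injective s).ne hxy) ((MulAction.injective s).ne hxz)
    ((MulAction.injective s).ne hyz) (by rw [hconj, hgx]) (by rw [hconj, hgy])
    (by rw [hconj, hgz])
  exact fun a ha => smul_left_cancel s (by rw [← hconj, hfix _ (hmem ha)])

end Stabilizer

theorem stmt_16_general (𝓑 : Finset (Finset P)) (v k lam n : ℕ)
    (hD : IsDesign 𝓑 v k lam) (hsym : 𝓑.card = v) (hlam : 1 < lam)
    (G : Subgroup (Equiv.Perm P)) (hAut : IsAutGroup G 𝓑)
    (hflag : IsFlagTransitive G 𝓑)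
    (B : Finset P) (hB : B ∈ 𝓑)
    (hdih : Nonempty (MulAction.stabilizer G B ≃* DihedralGroup n) ∨
      (∃ φ : MulAction.stabilizer G B →* Equiv.Perm B,
        (∀ (h : MulAction.stabilizer G B) (a : B), (φ h a : P) = h • (a : P)) ∧
        Nonempty (φ.range ≃* DihedralGroup n))) :
    ∀ g : G, g • B = B → (∀ a ∈ B, g • a = a) → g = 1 := by
  intro g hgB hgfix
  have hgAut : ∀ C ∈ 𝓑, g • C ∈ 𝓑 := hAut g g.2
  refine eq_of_smul_eq_smul (α := P) fun y => ?_
  rw [one_smul]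
  by_contra hy
  rcases (by omega : lam = 2 ∨ 3 ≤ lam) with hlam₂ | hlam₃
  · exact hy (hD.smul_eq_of_forall_smul_block_eq
      (fun C hC => hD.smul_eq_of_lam_eq_two hsym hlam₂ hgAut hB hgB hgfix hC) y)
  obtain ⟨D, hDmem⟩ : {C ∈ 𝓑 | y ∈ C ∧ g • y ∈ C}.Nonempty := by
    rw [← card_pos, hD.pair_blocks y _ (Ne.symm hy)]; omega
  obtain ⟨hD𝓑, hyD, hgyD⟩ := mem_filter.mp hDmem
  have hyB : y ∉ B := fun h => hy (hgfix y h)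
  have hgyB : g • y ∉ B := fun h => hyB (by rwa [← hgB, smul_mem_smul_finset_iff] at h)
  have hgD := hD.smul_eq_of_mem_of_notMem hsym hB hD𝓑 (hgAut D hD𝓑) hgfix hgyD
    (smul_mem_smul_finset hyD) hgyB
  obtain ⟨x₁, hx₁, x₂, hx₂, x₃, hx₃, h₁₂, h₁₃, h₂₃⟩ := two_lt_card.mp
    (hD.card_inter hsym hB hD𝓑 (fun h => hyB (h ▸ hyD)) ▸ hlam₃)
  rw [mem_inter] at hx₁ hx₂ hx₃
  have hBne : B.Nonempty :=
    card_pos.mp (by rw [hD.blocks_card B hB]; exact hD.two_lt_k.trans' two_pos)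
  exact hy (hflag.smul_eq_of_three_fixed_points hB hBne
    (isDihedralLike_range_stabilizerToPerm hdih) hD𝓑 hgD hx₁.2 hx₂.2 hx₃.2 h₁₂ h₁₃ h₂₃
    (hgfix _ hx₁.1) (hgfix _ hx₂.1) (hgfix _ hx₃.1) y hyD)

/-- **Lemma 6.4.** Let `G` be a flag-transitive automorphism group of a symmetric design
with `λ > 1`. If `G_B` or the induced permutation group `G_B^B` is dihedral of order
`2n` (`n ≥ 3`), then `G_B` acts faithfully on `B`. -/
theorem stmt_16 (𝓑 : Finset (Finset P)) (v k lam n : ℕ)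
    (hD : IsDesign 𝓑 v k lam) (hsym : 𝓑.card = v) (hlam : 1 < lam)
    (G : Subgroup (Equiv.Perm P)) (hAut : IsAutGroup G 𝓑)
    (hflag : IsFlagTransitive G 𝓑) (hn : 3 ≤ n)
    (B : Finset P) (hB : B ∈ 𝓑)
    (hdih : Nonempty (MulAction.stabilizer G B ≃* DihedralGroup n) ∨
      (∃ φ : MulAction.stabilizer G B →* Equiv.Perm B,
        (∀ (h : MulAction.stabilizer G B) (a : B), (φ h a : P) = h • (a : P)) ∧
        Nonempty (φ.range ≃* DihedralGroup n))) :
    ∀ g : G, g • B = B → (∀ a ∈ B, g • a = a) → g = 1 :=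
  stmt_16_general 𝓑 v k lam n hD hsym hlam G hAut hflag B hB hdih
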